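/- arXiv:2301.10807 — 2 statements merged into one kernel-verified Lean document; each statement's English description precedes it below -/
import Mathlib

section
/- Let (M_k)_{k≥0} be a sequence of epistemic transition structures over a common basis such that RT_k(M_{k'}) = RT_k(M_k) for all k' ≥ k ≥ 0, and let M_ω be the structure over the same basis with transition relation ⋃_{k≥0} RT_k(M_k). Then RT_k(M_ω) = RT_k(M_k) for all k ≥ 0. -/
namespace KBP

/-- `k`-step reachable states of a transition system with initial states `S0`. -/
def RSk {S : Type} (S0 : Set S) (T : Set (S × S)) : ℕ → Set S
  | 0 => S0
  | k + 1 => RSk S0 T k ∪ {s' | ∃ s ∈ RSk S0 T k, (s, s') ∈ T}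

/-- `k`-step reachable transitions. -/
def RTk {S : Type} (S0 : Set S) (T : Set (S × S)) : ℕ → Set (S × S)
  | 0 => ∅
  | k + 1 => RTk S0 T k ∪ {p | p ∈ T ∧ p.1 ∈ RSk S0 T k}

lemma RTk_subset_T {S : Type} (S0 : Set S) (T : Set (S × S)) :
    ∀ k, RTk S0 T k ⊆ T
  | 0 => by simp [RTk]
  | k + 1 => by
    intro p hp
    rcases hp with h | h
    · exact RTk_subset_T S0 T k h
    · exact h.1

lemma RTk_mono {S : Type} (S0 : Set S) (T : Set (S × S)) {k k' : ℕ}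
    (h : k ≤ k') : RTk S0 T k ⊆ RTk S0 T k' := by
  induction h with
  | refl => exact subset_rfl
  | step _ ih => exact ih.trans (by intro p hp; exact Or.inl hp)

lemma RSk_eq_snd_RTk {S : Type} (S0 : Set S) (T : Set (S × S)) :
    ∀ k, RSk S0 T k = S0 ∪ Prod.snd '' RTk S0 T k
  | 0 => by simp [RSk, RTk]
  | k + 1 => by
    have ih := RSk_eq_snd_RTk S0 T k
    ext s'
    simp only [RSk, RTk, Set.mem_union, Set.mem_setOf_eq, Set.mem_image,
      Set.image_union, ih]
    constructor
    · rintro ((h | ⟨p, hp, rfl⟩) | ⟨s, hs, hT⟩)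
      · exact Or.inl h
      · exact Or.inr (Or.inl ⟨p, hp, rfl⟩)
      · exact Or.inr (Or.inr ⟨(s, s'), ⟨hT, hs⟩, rfl⟩)
    · rintro (h | (⟨p, hp, rfl⟩ | ⟨p, ⟨hpT, hp1⟩, rfl⟩))
      · exact Or.inl (Or.inl h)
      · exact Or.inl (Or.inr ⟨p, hp, rfl⟩)
      · exact Or.inr ⟨p.1, hp1, hpT⟩

/-- For a coherent sequence of epistemic transition structures over a common
basis, the limit structure with transition relation `⋃ₖ RTₖ(Mₖ)` has the same
`k`-step reachable transitions as `Mₖ`, for every `k`. -/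
theorem RTk_limit {S : Type} (S0 : Set S) (T : ℕ → Set (S × S))
    (hcoh : ∀ k k' : ℕ, k ≤ k' → RTk S0 (T k') k = RTk S0 (T k) k)
    (Tω : Set (S × S)) (hTω : Tω = ⋃ k, RTk S0 (T k) k) :
    ∀ k : ℕ, RTk S0 Tω k = RTk S0 (T k) k := by
  intro k
  induction k with
  | zero => simp [RTk]
  | succ k ih =>
    have hRT : RTk S0 Tω k = RTk S0 (T (k + 1)) k := by
      rw [ih, ← hcoh k (k + 1) (Nat.le_succ k)]
    have hRS : RSk S0 Tω k = RSk S0 (T (k + 1)) k := by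
      rw [RSk_eq_snd_RTk, RSk_eq_snd_RTk, hRT]
    show RTk S0 Tω k ∪ {p | p ∈ Tω ∧ p.1 ∈ RSk S0 Tω k}
        = RTk S0 (T (k + 1)) k ∪ {p | p ∈ T (k + 1) ∧ p.1 ∈ RSk S0 (T (k + 1)) k}
    rw [hRT, hRS]
    ext p
    constructor
    · rintro (h | ⟨hpω, hp1⟩)
      · exact Or.inl h
      · rw [hTω] at hpω
        obtain ⟨_, ⟨j, rfl⟩, hpj⟩ := hpω
        by_cases hj : j ≤ k + 1
        · have : p ∈ RTk S0 (T (k + 1)) j := by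
            rw [hcoh j (k + 1) hj]; exact hpj
          exact RTk_mono S0 (T (k + 1)) hj this
        · have hjk : k + 1 ≤ j := le_of_not_ge hj
          have hpT : p ∈ T j := RTk_subset_T S0 (T j) j hpj
          have hRSj : RSk S0 (T (k + 1)) k = RSk S0 (T j) k := by
            rw [RSk_eq_snd_RTk, RSk_eq_snd_RTk,
              hcoh k (k + 1) (Nat.le_succ k), hcoh k j (Nat.le_of_succ_le hjk)]
          have : p ∈ RTk S0 (T j) (k + 1) :=
            Or.inr ⟨hpT, by rw [← hRSj]; exact hp1⟩
          rw [hcoh (k + 1) j hjk] at this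
          exact this
    · rintro (h | h)
      · exact Or.inl h
      · refine Or.inr ⟨?_, h.2⟩
        rw [hTω]
        exact Set.mem_iUnion.mpr ⟨k + 1, Or.inr h⟩

end KBP
end

section
/- For an epistemic must/can transition structure Y and any epistemic formula φ, positive satisfaction coincides with constructive satisfaction of the negation normal form, and negative satisfaction coincides with constructive satisfaction of the negation normal form of the negation: for all s reachable in Y_ν, Y, s ⊨_p φ iff Y, s ⊨ nnf(φ), and Y, s ⊨_n φ iff Y, s ⊨ nnf(¬φ). -/
namespace KBP

/-- All reachable states. -/
def Reach {S : Type} (S0 : Set S) (T : Set (S × S)) : Set S := ⋃ k, RSk S0 T k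

/-- Epistemic formulas (with the abbreviations `true`, `∨`, `M` as primitives). -/
inductive EFrm (P A : Type) : Type
  | prop : P → EFrm P A
  | nprop : P → EFrm P A
  | fls : EFrm P A
  | tru : EFrm P A
  | neg : EFrm P A → EFrm P A
  | and : EFrm P A → EFrm P A → EFrm P A
  | or : EFrm P A → EFrm P A → EFrm P A
  | K : A → EFrm P A → EFrm P A
  | M : A → EFrm P A → EFrm P A

/-- Positive and negative satisfaction over a must/can structure, as a pair. -/
def psns (E : A → Set (S × S)) (L : S → Set P) (S0 : Set S)
    (Tμ Tν : Set (S × S)) : EFrm P A → (S → Prop) × (S → Prop)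
  | .prop p => (fun s => p ∈ L s, fun s => p ∉ L s)
  | .nprop p => (fun s => p ∉ L s, fun s => p ∈ L s)
  | .fls => (fun _ => False, fun _ => True)
  | .tru => (fun _ => True, fun _ => False)
  | .neg φ => ((psns E L S0 Tμ Tν φ).2, (psns E L S0 Tμ Tν φ).1)
  | .and φ ψ =>
      (fun s => (psns E L S0 Tμ Tν φ).1 s ∧ (psns E L S0 Tμ Tν ψ).1 s,
       fun s => (psns E L S0 Tμ Tν φ).2 s ∨ (psns E L S0 Tμ Tν ψ).2 s)
  | .or φ ψ =>
      (fun s => (psns E L S0 Tμ Tν φ).1 s ∨ (psns E L S0 Tμ Tν ψ).1 s,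
       fun s => (psns E L S0 Tμ Tν φ).2 s ∧ (psns E L S0 Tμ Tν ψ).2 s)
  | .K a φ =>
      (fun s => ∀ s' ∈ Reach S0 Tν, (s, s') ∈ E a → (psns E L S0 Tμ Tν φ).1 s',
       fun s => ∃ s' ∈ Reach S0 Tμ, (s, s') ∈ E a ∧ (psns E L S0 Tμ Tν φ).2 s')
  | .M a φ =>
      (fun s => ∃ s' ∈ Reach S0 Tμ, (s, s') ∈ E a ∧ (psns E L S0 Tμ Tν φ).1 s',
       fun s => ∀ s' ∈ Reach S0 Tν, (s, s') ∈ E a → (psns E L S0 Tμ Tν φ).2 s')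

/-- Positive satisfaction `Y, s ⊨ₚ φ`. -/
def psat (E : A → Set (S × S)) (L : S → Set P) (S0 : Set S)
    (Tμ Tν : Set (S × S)) (s : S) (φ : EFrm P A) : Prop :=
  (psns E L S0 Tμ Tν φ).1 s

/-- Negative satisfaction `Y, s ⊨ₙ φ`. -/
def nsat (E : A → Set (S × S)) (L : S → Set P) (S0 : Set S)
    (Tμ Tν : Set (S × S)) (s : S) (φ : EFrm P A) : Prop :=
  (psns E L S0 Tμ Tν φ).2 s

/-- Negation normal form; `nnfAux false φ = nnf φ`, `nnfAux true φ = nnf ¬φ`. -/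
def nnfAux {P A : Type} : Bool → EFrm P A → EFrm P A
  | false, .prop p => .prop p
  | false, .nprop p => .nprop p
  | false, .fls => .fls
  | false, .tru => .tru
  | false, .neg φ => nnfAux true φ
  | false, .and φ ψ => .and (nnfAux false φ) (nnfAux false ψ)
  | false, .or φ ψ => .or (nnfAux false φ) (nnfAux false ψ)
  | false, .K a φ => .K a (nnfAux false φ)
  | false, .M a φ => .M a (nnfAux false φ)
  | true, .prop p => .nprop p
  | true, .nprop p => .prop p
  | true, .fls => .tru
  | true, .tru => .fls
  | true, .neg φ => nnfAux false φ
  | true, .and φ ψ => .or (nnfAux true φ) (nnfAux true ψ)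
  | true, .or φ ψ => .and (nnfAux true φ) (nnfAux true ψ)
  | true, .K a φ => .M a (nnfAux true φ)
  | true, .M a φ => .K a (nnfAux true φ)

/-- Constructive satisfaction of (negation-normal-form) formulas:
`K` over the upper bound, `M` over the lower bound. -/
def csat (E : A → Set (S × S)) (L : S → Set P) (S0 : Set S)
    (Tμ Tν : Set (S × S)) : S → EFrm P A → Prop
  | s, .prop p => p ∈ L s
  | s, .nprop p => p ∉ L s
  | _, .fls => False
  | _, .tru => True
  | s, .neg φ => ¬ csat E L S0 Tμ Tν s φ
  | s, .and φ ψ => csat E L S0 Tμ Tν s φ ∧ csat E L S0 Tμ Tν s ψ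
  | s, .or φ ψ => csat E L S0 Tμ Tν s φ ∨ csat E L S0 Tμ Tν s ψ
  | s, .K a φ => ∀ s' ∈ Reach S0 Tν, (s, s') ∈ E a → csat E L S0 Tμ Tν s' φ
  | s, .M a φ => ∃ s' ∈ Reach S0 Tμ, (s, s') ∈ E a ∧ csat E L S0 Tμ Tν s' φ

theorem RSk_mono {S : Type} (S0 : Set S) {Tμ Tν : Set (S × S)} (h : Tμ ⊆ Tν) :
    ∀ k, RSk S0 Tμ k ⊆ RSk S0 Tν k
  | 0 => le_refl _
  | k + 1 => by
    intro s hs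
    rcases hs with hs | ⟨s', hs', hT⟩
    · exact Or.inl (RSk_mono S0 h k hs)
    · exact Or.inr ⟨s', RSk_mono S0 h k hs', h hT⟩

theorem Reach_mono {S : Type} (S0 : Set S) {Tμ Tν : Set (S × S)} (h : Tμ ⊆ Tν) :
    Reach S0 Tμ ⊆ Reach S0 Tν := by
  intro s hs
  rcases Set.mem_iUnion.1 hs with ⟨k, hk⟩
  exact Set.mem_iUnion.2 ⟨k, RSk_mono S0 h k hk⟩

/-- Positive satisfaction coincides with constructive satisfaction of the
negation normal form, and negative satisfaction with constructive satisfaction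
of the negation normal form of the negation. -/
theorem psat_nsat_iff_csat_nnf {S P A : Type} (E : A → Set (S × S))
    (L : S → Set P) (S0 : Set S) (Tμ Tν : Set (S × S)) (hμν : Tμ ⊆ Tν)
    (φ : EFrm P A) (s : S) (hs : s ∈ Reach S0 Tν) :
    (psat E L S0 Tμ Tν s φ ↔ csat E L S0 Tμ Tν s (nnfAux false φ)) ∧
    (nsat E L S0 Tμ Tν s φ ↔ csat E L S0 Tμ Tν s (nnfAux true φ)) := by
  induction φ generalizing s with
  | prop p => simp [psat, nsat, psns, nnfAux, csat]
  | nprop p => simp [psat, nsat, psns, nnfAux, csat]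
  | fls => simp [psat, nsat, psns, nnfAux, csat]
  | tru => simp [psat, nsat, psns, nnfAux, csat]
  | neg φ ih =>
    have := ih s hs
    simp only [psat, nsat, psns, nnfAux] at *
    exact ⟨this.2, this.1⟩
  | and φ ψ ihφ ihψ =>
    have h1 := ihφ s hs; have h2 := ihψ s hs
    simp only [psat, nsat, psns, nnfAux, csat] at *
    constructor
    · exact and_congr h1.1 h2.1
    · exact or_congr h1.2 h2.2
  | or φ ψ ihφ ihψ =>
    have h1 := ihφ s hs; have h2 := ihψ s hs
    simp only [psat, nsat, psns, nnfAux, csat] at *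
    constructor
    · exact or_congr h1.1 h2.1
    · exact and_congr h1.2 h2.2
  | K a φ ih =>
    simp only [psat, nsat, psns, nnfAux, csat]
    constructor
    · constructor
      · intro h s' hs' hE
        exact ((ih s' hs').1).1 (h s' hs' hE)
      · intro h s' hs' hE
        exact ((ih s' hs').1).2 (h s' hs' hE)
    · constructor
      · rintro ⟨s', hs', hE, hφ⟩
        exact ⟨s', hs', hE, ((ih s' (Reach_mono S0 hμν hs')).2).1 hφ⟩
      · rintro ⟨s', hs', hE, hφ⟩
        exact ⟨s', hs', hE, ((ih s' (Reach_mono S0 hμν hs')).2).2 hφ⟩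
  | M a φ ih =>
    simp only [psat, nsat, psns, nnfAux, csat]
    constructor
    · constructor
      · rintro ⟨s', hs', hE, hφ⟩
        exact ⟨s', hs', hE, ((ih s' (Reach_mono S0 hμν hs')).1).1 hφ⟩
      · rintro ⟨s', hs', hE, hφ⟩
        exact ⟨s', hs', hE, ((ih s' (Reach_mono S0 hμν hs')).1).2 hφ⟩
    · constructor
      · intro h s' hs' hE
        exact ((ih s' hs').2).1 (h s' hs' hE)
      · intro h s' hs' hE
        exact ((ih s' hs').2).2 (h s' hs' hE)

end KBP
end
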